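/- arXiv:2312.10565 — 7 statements merged into one kernel-verified Lean document; each statement's English description precedes it below -/
import Mathlib

section
/- The Z-module Z_{p^∞} (the Prüfer p-group) is not Z-pr-first: Hom_Z(Z_{p^∞}, Z_p) = 0, hence the trace preradical α_{Z_p}^{Z_{p^∞}} (sending U to the sum of images of the submodule Z_p ≤ Z_{p^∞} under maps Z_{p^∞} → U) is zero on the submodule Z_p but nonzero on Z_{p^∞}. -/
/-- The abelian group `ℚ/ℤ` as a `ℤ`-module. -/
abbrev QmodZ : Type := ℚ ⧸ (Submodule.span ℤ ({1} : Set ℚ))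

/-- The Prüfer `p`-group: the `p`-primary torsion part of `ℚ/ℤ`. -/
abbrev Pruefer (p : ℕ) : Submodule ℤ QmodZ :=
  Submodule.torsion' ℤ QmodZ (Submonoid.powers (p : ℤ))

/-- The Prüfer `p`-group is divisible by `p`. -/
lemma pruefer_div (p : ℕ) (hp : p.Prime) (x : Pruefer p) :
    ∃ y : Pruefer p, (p : ℤ) • y = x := by
  obtain ⟨v, hv⟩ := x
  rw [Submodule.mem_torsion'_iff] at hv
  obtain ⟨a, ha⟩ := hv
  obtain ⟨q, rfl⟩ := Submodule.Quotient.mk_surjective _ v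
  have hp0 : (p : ℚ) ≠ 0 := Nat.cast_ne_zero.mpr hp.pos.ne'
  have key : (p : ℤ) • (Submodule.Quotient.mk (q / p) : QmodZ) = Submodule.Quotient.mk q := by
    rw [← Submodule.Quotient.mk_smul]
    congr 1
    rw [zsmul_eq_mul, Int.cast_natCast]; field_simp
  refine ⟨⟨Submodule.Quotient.mk (q / p), ?_⟩, ?_⟩
  · rw [Submodule.mem_torsion'_iff]
    refine ⟨a * ⟨(p : ℤ), 1, pow_one _⟩, ?_⟩
    have : (a * ⟨(p : ℤ), 1, pow_one _⟩ : Submonoid.powers (p:ℤ)) •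
          (Submodule.Quotient.mk (q / p) : QmodZ)
        = a • ((p : ℤ) • (Submodule.Quotient.mk (q / p) : QmodZ)) := by
      rw [mul_smul]; rfl
    rw [this, key, ha]
  · exact Subtype.ext key

/-- `Hom_ℤ(ℤ_{p^∞}, ℤ/p) = 0`. -/
lemma hom_zero (p : ℕ) (hp : p.Prime) (f : (Pruefer p) →ₗ[ℤ] ZMod p) : f = 0 := by
  ext x
  obtain ⟨y, hy⟩ := pruefer_div p hp x
  have : f x = (p : ℤ) • f y := by rw [← map_smul, hy]
  rw [this]
  simp only [zsmul_eq_mul, Int.cast_natCast, ZMod.natCast_self, zero_mul, LinearMap.zero_apply]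

/-- `ℤ_{p^∞}` is not `ℤ`-pr-first: `Hom_ℤ(ℤ_{p^∞}, ℤ/p) = 0`, hence the trace preradical
`β_C` of the socle `C ≅ ℤ/p` of `ℤ_{p^∞}` vanishes on `ℤ/p` (so on the submodule `C`)
but is nonzero on `ℤ_{p^∞}` itself. -/
theorem stmt9 (p : ℕ) (hp : p.Prime) :
    Subsingleton ((Pruefer p) →ₗ[ℤ] ZMod p) ∧
    (⨆ f : (Pruefer p) →ₗ[ℤ] ZMod p,
        (Submodule.torsionBy ℤ (Pruefer p) (p : ℤ)).map f) = ⊥ ∧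
    (⨆ f : (Pruefer p) →ₗ[ℤ] (Pruefer p),
        (Submodule.torsionBy ℤ (Pruefer p) (p : ℤ)).map f) ≠ ⊥ := by
  have hp0 : (p : ℚ) ≠ 0 := Nat.cast_ne_zero.mpr hp.pos.ne'
  refine ⟨⟨fun f g => by rw [hom_zero p hp f, hom_zero p hp g]⟩, ?_, ?_⟩
  · rw [iSup_eq_bot]
    intro f
    rw [hom_zero p hp f]
    exact Submodule.map_zero _
  · -- the element `1/p` is a nonzero `p`-torsion element of `ℤ_{p^∞}`
    have hmem : (Submodule.Quotient.mk (1 / p : ℚ) : QmodZ) ∈ Pruefer p := by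
      rw [Submodule.mem_torsion'_iff]
      refine ⟨⟨(p : ℤ), 1, pow_one _⟩, ?_⟩
      show (p : ℤ) • (Submodule.Quotient.mk (1 / p : ℚ) : QmodZ) = 0
      rw [← Submodule.Quotient.mk_smul, Submodule.Quotient.mk_eq_zero]
      have : (p : ℤ) • (1 / p : ℚ) = 1 := by rw [zsmul_eq_mul, Int.cast_natCast]; field_simp
      rw [this]
      exact Submodule.mem_span_singleton_self 1
    set x₀ : Pruefer p := ⟨Submodule.Quotient.mk (1 / p : ℚ), hmem⟩ with hx₀
    have hx₀ne : x₀ ≠ 0 := by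
      intro h
      have h2 : (Submodule.Quotient.mk (1 / p : ℚ) : QmodZ) = 0 := congrArg Subtype.val h
      rw [Submodule.Quotient.mk_eq_zero, Submodule.mem_span_singleton] at h2
      obtain ⟨n, hn⟩ := h2
      have : (n : ℚ) = 1 / p := by simpa using hn
      have hnp : (n * p : ℚ) = 1 := by rw [this]; field_simp
      have : ((n * p : ℤ) : ℚ) = ((1 : ℤ) : ℚ) := by push_cast; exact hnp
      have h3 : (n * p : ℤ) = 1 := Int.cast_injective this
      have : (p : ℤ) ∣ 1 := ⟨n, by linarith [h3]⟩
      have := Int.le_of_dvd one_pos this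
      have := hp.two_le
      omega
    have htors : x₀ ∈ Submodule.torsionBy ℤ (Pruefer p) (p : ℤ) := by
      rw [Submodule.mem_torsionBy_iff]
      apply Subtype.ext
      show (p : ℤ) • (Submodule.Quotient.mk (1 / p : ℚ) : QmodZ) = 0
      rw [← Submodule.Quotient.mk_smul, Submodule.Quotient.mk_eq_zero]
      have : (p : ℤ) • (1 / p : ℚ) = 1 := by rw [zsmul_eq_mul, Int.cast_natCast]; field_simp
      rw [this]
      exact Submodule.mem_span_singleton_self 1
    intro h
    have : x₀ ∈ (⊥ : Submodule ℤ (Pruefer p)) := by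
      rw [← h]
      refine Submodule.mem_iSup_of_mem LinearMap.id ?_
      exact ⟨x₀, htors, rfl⟩
    exact hx₀ne (Submodule.mem_bot _ |>.mp this)
end

section
/- For a nonzero left R-module M, the following are equivalent: (1) M is R-pr-first (for every preradical α and nonzero submodule K ≤ M, α(K)=0 implies α(M)=0); (2) every nonzero submodule of M cogenerates M; (3) every nonzero cyclic submodule of M cogenerates M; (4) for all nonzero x, y ∈ M there exists f : M → Ry with f(x) ≠ 0. -/
universe u

/-- A preradical on `R`-Mod: a subfunctor of the identity functor. -/
structure Preradical (R : Type u) [Ring R] : Type (u + 1) where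
  rad : ∀ (M : Type u) [AddCommGroup M] [Module R M], Submodule R M
  map_le : ∀ {M N : Type u} [AddCommGroup M] [Module R M] [AddCommGroup N] [Module R N]
    (f : M →ₗ[R] N), (rad M).map f ≤ rad N

/-- Characterizations of `R`-pr-first modules: (1) first w.r.t. all preradicals;
(2) every nonzero submodule cogenerates `M`; (3) every nonzero cyclic submodule
cogenerates `M`; (4) for all nonzero `x, y` there is `f : M → Ry` with `f x ≠ 0`. -/
theorem stmt10 {R : Type u} [Ring R] {M : Type u} [AddCommGroup M] [Module R M]
    (hM : Nontrivial M) :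
    List.TFAE
      [∀ (α : Preradical R) (K : Submodule R M), K ≠ ⊥ → α.rad K = ⊥ → α.rad M = ⊥,
       ∀ N : Submodule R M, N ≠ ⊥ →
         ∃ (ι : Type u) (f : M →ₗ[R] (ι → N)), Function.Injective f,
       ∀ x : M, x ≠ 0 →
         ∃ (ι : Type u) (f : M →ₗ[R] (ι → Submodule.span R {x})), Function.Injective f,
       ∀ x y : M, x ≠ 0 → y ≠ 0 →
         ∃ f : M →ₗ[R] Submodule.span R {y}, f x ≠ 0] := by
  tfae_have 1 → 2
  · intro h1 N hN
    set α : Preradical R :=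
      { rad := fun X _ _ => ⨅ f : X →ₗ[R] ↥N, LinearMap.ker f
        map_le := by
          intro X Y _ _ _ _ f
          rintro y ⟨x, hx, rfl⟩
          refine Submodule.mem_iInf _ |>.mpr fun g => ?_
          exact Submodule.mem_iInf _ |>.mp hx (g ∘ₗ f) } with hα
    have hK : α.rad ↥N = ⊥ := by
      apply le_bot_iff.mp
      refine le_trans (iInf_le _ LinearMap.id) ?_
      simp
    have hM0 := h1 α N hN hK
    refine ⟨(M →ₗ[R] ↥N), LinearMap.pi (fun f => f), ?_⟩
    rw [← LinearMap.ker_eq_bot, eq_bot_iff]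
    intro x hx
    have hmem : x ∈ α.rad M := by
      simp only [hα, Submodule.mem_iInf, LinearMap.mem_ker]
      intro g
      exact congrFun hx g
    rw [hM0] at hmem
    exact hmem
  tfae_have 2 → 3
  · intro h2 x hx
    refine h2 _ ?_
    simpa using hx
  tfae_have 3 → 4
  · intro h3 x y hx hy
    obtain ⟨ι, f, hf⟩ := h3 y hy
    have hfx : f x ≠ 0 := fun h => hx (hf (by simpa using h))
    obtain ⟨i, hi⟩ : ∃ i, f x i ≠ 0 := by
      by_contra h
      push_neg at h
      exact hfx (funext h)
    refine ⟨(LinearMap.proj i) ∘ₗ f, ?_⟩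
    simpa using hi
  tfae_have 4 → 1
  · intro h4 α K hK hαK
    rw [eq_bot_iff]
    intro x hx
    rw [Submodule.mem_bot]
    by_contra hx0
    obtain ⟨y, hyK, hy0⟩ := (Submodule.ne_bot_iff K).mp hK
    obtain ⟨f, hfx⟩ := h4 x (y : M) hx0 (by simpa using hy0)
    have hle : Submodule.span R {(y : M)} ≤ K := by
      rw [Submodule.span_le]
      simpa using hyK
    have hspan : α.rad ↥(Submodule.span R {(y : M)}) = ⊥ := by
      have h1 : Submodule.map (Submodule.inclusion hle)
          (α.rad ↥(Submodule.span R {(y : M)})) = ⊥ :=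
        le_bot_iff.mp (hαK ▸ α.map_le (Submodule.inclusion hle))
      have h2 : Submodule.map (Submodule.inclusion hle)
          (α.rad ↥(Submodule.span R {(y : M)})) =
          Submodule.map (Submodule.inclusion hle) ⊥ := by
        rw [h1, Submodule.map_bot]
      exact Submodule.map_injective_of_injective
        (Submodule.inclusion_injective hle) h2
    have hmem : f x ∈ α.rad ↥(Submodule.span R {(y : M)}) :=
      α.map_le f ⟨x, hx, rfl⟩
    rw [hspan, Submodule.mem_bot] at hmem
    exact hfx hmem
  tfae_finish
end

section
/- A ring R is simple (has no nonzero proper two-sided ideals) if and only if every nonzero left R-module M is prime, i.e., for every two-sided ideal I of R and every submodule K ≤ M, IK = 0 implies IM = 0. -/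
universe u

/-!
If `R` is simple, a two-sided ideal `I` is `0` or `R`; in the second case `IK = K ≠ 0`, so the
implication is vacuous. Conversely, if `I` is a proper nonzero two-sided ideal, then `I`
annihilates `R ⧸ I` but not `R`, so in `M = R × (R ⧸ I)` the submodule `K = 0 × (R ⧸ I)`
satisfies `IK = 0` while `IM ⊇ I × 0` is nonzero.
-/

open Submodule

theorem TwoSidedIdeal.asIdeal_injective {R : Type*} [Ring R] :
    Function.Injective (asIdeal : TwoSidedIdeal R → Ideal R) := fun _ _ h =>
  SetLike.coe_injective <| coe_asIdeal.symm.trans <| (congrArg _ h).trans coe_asIdeal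

section

variable {R M N : Type*} [Ring R] [AddCommGroup M] [Module R M] [AddCommGroup N] [Module R N]

theorem Submodule.smul_top_eq_bot_iff {I : Ideal R} :
    I • (⊤ : Submodule R M) = ⊥ ↔ I ≤ Module.annihilator R M := by
  rw [← le_annihilator_iff, annihilator_top]

theorem Ideal.smul_top_quotient_eq_bot (I : Ideal R) [I.IsTwoSided] :
    I • (⊤ : Submodule R (R ⧸ I)) = ⊥ :=
  smul_top_eq_bot_iff.2 Ideal.annihilator_quotient.ge

theorem Submodule.smul_range_inr_eq_bot {I : Ideal R} (h : I • (⊤ : Submodule R N) = ⊥) :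
    I • LinearMap.range (LinearMap.inr R M N) = ⊥ := by
  rw [LinearMap.range_eq_map, ← map_smul'', h, Submodule.map_bot]

theorem LinearMap.range_inr_ne_bot [Nontrivial N] :
    LinearMap.range (LinearMap.inr R M N) ≠ ⊥ := by
  rw [Ne, LinearMap.range_eq_bot]
  obtain ⟨n, hn⟩ := exists_ne (0 : N)
  exact fun h => hn (congrArg Prod.snd (LinearMap.congr_fun h n))

theorem Ideal.eq_bot_of_smul_top_prod_eq_bot {I : Ideal R}
    (h : I • (⊤ : Submodule R (R × N)) = ⊥) : I = ⊥ := by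
  rw [smul_top_eq_bot_iff, Module.annihilator_prod,
    Module.annihilator_eq_bot.2 (inferInstance : FaithfulSMul R R)] at h
  exact le_bot_iff.1 (h.trans inf_le_left)

end

/-- A ring `R` is simple iff every nonzero left `R`-module `M` is prime:
for every two-sided ideal `I` and nonzero submodule `K ≤ M`, `IK = 0` implies `IM = 0`. -/
theorem stmt11 (R : Type u) [Ring R] :
    (∀ I : TwoSidedIdeal R, I = ⊥ ∨ I = ⊤) ↔
      ∀ (M : Type u) [AddCommGroup M] [Module R M], Nontrivial M →
        ∀ (I : TwoSidedIdeal R) (K : Submodule R M), K ≠ ⊥ →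
          TwoSidedIdeal.asIdeal I • K = ⊥ →
            TwoSidedIdeal.asIdeal I • (⊤ : Submodule R M) = ⊥ := by
  constructor
  · intro h M _ _ _ I K hK hIK
    rcases h I with rfl | rfl
    · rw [TwoSidedIdeal.bot_asIdeal, bot_smul]
    · rw [TwoSidedIdeal.top_asIdeal, top_smul] at hIK
      exact absurd hIK hK
  · intro h I
    refine or_iff_not_imp_right.2 fun hI => TwoSidedIdeal.asIdeal_injective ?_
    have : Nontrivial (R ⧸ I.asIdeal) :=
      Ideal.Quotient.nontrivial_iff.2 fun h => hI (TwoSidedIdeal.asIdeal_injective h)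
    exact Ideal.eq_bot_of_smul_top_prod_eq_bot <| h (R × R ⧸ I.asIdeal) inferInstance I _
      LinearMap.range_inr_ne_bot (smul_range_inr_eq_bot I.asIdeal.smul_top_quotient_eq_bot)
end

section
/- If a nonzero left R-module M is retractable and End_R(M) is a prime ring, then M is R-pid-first: for every idempotent preradical σ with σ(M) ≠ 0 and every nonzero submodule N of M, σ(N) ≠ 0. -/
universe u

/-- A preradical is idempotent if `σ(σ(M)) = σ(M)` for all `M`. -/
def Preradical.Idem {R : Type u} [Ring R] (σ : Preradical R) : Prop :=
  ∀ (M : Type u) [AddCommGroup M] [Module R M], σ.rad (σ.rad M) = ⊤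

/-- If `M` is retractable and `End_R(M)` is a prime ring (the product of any two
nonzero two-sided ideals is nonzero), then `M` is `R`-pid-first. -/
theorem stmt13 {R : Type u} [Ring R] {M : Type u} [AddCommGroup M] [Module R M]
    (hM : Nontrivial M)
    (hretr : ∀ N : Submodule R M, N ≠ ⊥ → ∃ f : M →ₗ[R] N, f ≠ 0)
    (hprime : ∀ I J : Ideal (Module.End R M),
      (∀ a ∈ I, ∀ r : Module.End R M, a * r ∈ I) →
      (∀ b ∈ J, ∀ r : Module.End R M, b * r ∈ J) →
      I ≠ ⊥ → J ≠ ⊥ → I * J ≠ ⊥) :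
    ∀ σ : Preradical R, σ.Idem → σ.rad M ≠ ⊥ →
      ∀ N : Submodule R M, N ≠ ⊥ → σ.rad N ≠ ⊥ := by
  intro σ _hidem hσ N hN hσN
  -- full invariance of σ.rad M
  have hfi : ∀ (r : Module.End R M) (x : M), x ∈ σ.rad M → r x ∈ σ.rad M := by
    intro r x hx
    exact σ.map_le (r : M →ₗ[R] M) ⟨x, hx, rfl⟩
  -- the two-sided ideal of endomorphisms with range in σ.rad M
  let I : Ideal (Module.End R M) :=
    { carrier := {f | ∀ x, f x ∈ σ.rad M}
      add_mem' := fun hf hg x => (σ.rad M).add_mem (hf x) (hg x)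
      zero_mem' := fun x => (σ.rad M).zero_mem
      smul_mem' := fun r f hf x => hfi r (f x) (hf x) }
  -- the two-sided ideal of endomorphisms killing σ.rad M
  let J : Ideal (Module.End R M) :=
    { carrier := {f | ∀ x ∈ σ.rad M, f x = 0}
      add_mem' := fun {f g} hf hg x hx => by
        simp [LinearMap.add_apply, hf x hx, hg x hx]
      zero_mem' := fun x _ => rfl
      smul_mem' := fun r f hf x hx => by
        have : f x = 0 := hf x hx
        simp [smul_eq_mul, Module.End.mul_apply, this] }
  have hIr : ∀ b ∈ I, ∀ r : Module.End R M, b * r ∈ I := by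
    intro b hb r x
    exact hb (r x)
  have hJr : ∀ a ∈ J, ∀ r : Module.End R M, a * r ∈ J := by
    intro a ha r x hx
    exact ha (r x) (hfi r x hx)
  -- I ≠ ⊥
  obtain ⟨h, hh⟩ := hretr (σ.rad M) hσ
  have hI : I ≠ ⊥ := by
    intro hbot
    apply hh
    have hmem : (σ.rad M).subtype ∘ₗ h ∈ I := fun x => (h x).2
    rw [hbot, Ideal.mem_bot] at hmem
    ext x
    simpa using DFunLike.congr_fun hmem x
  -- J ≠ ⊥
  obtain ⟨g, hg⟩ := hretr N hN
  have hgkill : ∀ x ∈ σ.rad M, g x = 0 := by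
    intro x hx
    have : g x ∈ σ.rad N := σ.map_le (g : M →ₗ[R] N) ⟨x, hx, rfl⟩
    rw [hσN] at this
    simpa using this
  have hJ : J ≠ ⊥ := by
    intro hbot
    apply hg
    have hmem : N.subtype ∘ₗ g ∈ J := by
      intro x hx
      simp [hgkill x hx]
    rw [hbot, Ideal.mem_bot] at hmem
    ext x
    simpa using DFunLike.congr_fun hmem x
  -- but J * I = ⊥
  apply hprime J I hJr hIr hJ hI
  rw [eq_bot_iff]
  refine Ideal.mul_le.mpr ?_
  intro a ha b hb
  rw [Ideal.mem_bot]
  ext x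
  have : a (b x) = 0 := ha (b x) (hb x)
  simpa [Module.End.mul_apply] using this
end

section
/- The ring Z/p²Z, as a module over itself, satisfies: for all nonzero submodules N, K there is a nonzero homomorphism N → K; but End(Z/p²Z) ≅ Z/p²Z is not a prime ring. (Hence the converse of 'retractable with prime endomorphism ring implies R-pid-first' fails.) -/
/-!
The ideals of `ℤ/p²ℤ` form the chain `0 ⊂ (p) ⊂ ℤ/p²ℤ`: a nonunit is a multiple of `p`, and a
nonzero multiple `p c` has `c` a unit, so every nonzero element divides `p`. Hence a nonzero `N`
is either the whole ring, which maps onto any nonzero `K` by `1 ↦ k`, or lies in `(p) ⊆ K`.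
And `(p) (p) = (p²) = 0` shows the ring is not prime.
-/

theorem Submodule.exists_linearMap_top_ne_zero {R : Type*} [Ring R] {K : Submodule R R}
    (hK : K ≠ ⊥) : ∃ f : (⊤ : Submodule R R) →ₗ[R] K, f ≠ 0 := by
  obtain ⟨k, hk, hk0⟩ := Submodule.exists_mem_ne_zero_of_ne_bot hK
  refine ⟨(LinearMap.toSpanSingleton R K ⟨k, hk⟩).comp (⊤ : Submodule R R).subtype, fun h => ?_⟩
  have h1 := LinearMap.congr_fun h ⟨1, Submodule.mem_top⟩
  simp only [LinearMap.comp_apply, Submodule.subtype_apply, LinearMap.toSpanSingleton_apply,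
    one_smul, LinearMap.zero_apply] at h1
  exact hk0 (congrArg Subtype.val h1)

theorem Submodule.inclusion_ne_zero {R M : Type*} [Semiring R] [AddCommMonoid M] [Module R M]
    {N K : Submodule R M} (hNK : N ≤ K) (hN : N ≠ ⊥) : Submodule.inclusion hNK ≠ 0 := by
  obtain ⟨n, hn, hn0⟩ := Submodule.exists_mem_ne_zero_of_ne_bot hN
  exact fun h => hn0 (congrArg Subtype.val (LinearMap.congr_fun h ⟨n, hn⟩))

namespace ZMod

theorem natCast_mul_self_eq_zero (p : ℕ) : (p : ZMod (p ^ 2)) * p = 0 := by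
  rw [← Nat.cast_mul, ← sq, natCast_self]

theorem isUnit_natCast_iff_not_dvd {p : ℕ} (hp : p.Prime) {k : ℕ} (hk : k ≠ 0) (m : ℕ) :
    IsUnit (m : ZMod (p ^ k)) ↔ ¬ p ∣ m := by
  rw [isUnit_iff_coprime, Nat.coprime_pow_right_iff (Nat.pos_of_ne_zero hk), Nat.coprime_comm,
    hp.coprime_iff_not_dvd]

theorem natCast_dvd_of_not_isUnit {p : ℕ} (hp : p.Prime) {k : ℕ} (hk : k ≠ 0)
    {x : ZMod (p ^ k)} (hx : ¬ IsUnit x) :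
    (p : ZMod (p ^ k)) ∣ x := by
  have : NeZero (p ^ k) := ⟨pow_ne_zero k hp.ne_zero⟩
  rw [← natCast_zmod_val x] at hx ⊢
  rw [isUnit_natCast_iff_not_dvd hp hk, not_not] at hx
  exact Nat.cast_dvd_cast hx

theorem natCast_ne_zero {p : ℕ} (hp : p.Prime) : (p : ZMod (p ^ 2)) ≠ 0 := by
  rw [Ne, natCast_eq_zero_iff]
  intro h
  have := Nat.le_of_dvd hp.pos h
  nlinarith [hp.two_le]

theorem dvd_natCast_of_ne_zero {p : ℕ} (hp : p.Prime) {x : ZMod (p ^ 2)} (hx : x ≠ 0) :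
    x ∣ (p : ZMod (p ^ 2)) := by
  by_cases hxu : IsUnit x
  · exact hxu.dvd
  obtain ⟨c, rfl⟩ := natCast_dvd_of_not_isUnit hp two_ne_zero hxu
  have hc : IsUnit c := by
    by_contra hc
    obtain ⟨d, rfl⟩ := natCast_dvd_of_not_isUnit hp two_ne_zero hc
    exact hx (by rw [← mul_assoc, natCast_mul_self_eq_zero p, zero_mul])
  exact hc.dvd_mul_right.mp dvd_rfl

theorem natCast_mem_of_ne_bot {p : ℕ} (hp : p.Prime) {K : Ideal (ZMod (p ^ 2))} (hK : K ≠ ⊥) :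
    (p : ZMod (p ^ 2)) ∈ K := by
  obtain ⟨k, hk, hk0⟩ := Submodule.exists_mem_ne_zero_of_ne_bot hK
  obtain ⟨c, hc⟩ := dvd_natCast_of_ne_zero hp hk0
  exact hc ▸ K.mul_mem_right c hk

theorem le_span_natCast_of_ne_top {p : ℕ} (hp : p.Prime) {N : Ideal (ZMod (p ^ 2))}
    (hN : N ≠ ⊤) :
    N ≤ Ideal.span {(p : ZMod (p ^ 2))} := fun _ hx =>
  Ideal.mem_span_singleton.mpr <|
    natCast_dvd_of_not_isUnit hp two_ne_zero fun hu => hN (Ideal.eq_top_of_isUnit_mem N hx hu)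

end ZMod

/-- For `R = ℤ/p²ℤ`: between any two nonzero submodules of `R` there is a nonzero
homomorphism, `End_R(R) ≅ R`, yet `R` is not a prime ring; hence the converse of
"retractable with prime endomorphism ring implies `R`-pid-first" fails. -/
theorem stmt14 (p : ℕ) (hp : p.Prime) :
    (∀ N K : Submodule (ZMod (p ^ 2)) (ZMod (p ^ 2)), N ≠ ⊥ → K ≠ ⊥ →
        ∃ f : N →ₗ[ZMod (p ^ 2)] K, f ≠ 0) ∧
    Nonempty (Module.End (ZMod (p ^ 2)) (ZMod (p ^ 2)) ≃+* ZMod (p ^ 2)) ∧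
    ¬ (∀ I J : Ideal (ZMod (p ^ 2)), I ≠ ⊥ → J ≠ ⊥ → I * J ≠ ⊥) := by
  refine ⟨fun N K hN hK => ?_, ⟨(RingEquiv.moduleEndSelf (ZMod (p ^ 2))).symm.trans
      (RingEquiv.toOpposite (ZMod (p ^ 2))).symm⟩, fun hprime => ?_⟩
  · by_cases hNtop : N = ⊤
    · subst hNtop
      exact Submodule.exists_linearMap_top_ne_zero hK
    · have hNK : N ≤ K := (ZMod.le_span_natCast_of_ne_top hp hNtop).trans
        ((Ideal.span_singleton_le_iff_mem K).mpr (ZMod.natCast_mem_of_ne_bot hp hK))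
      exact ⟨Submodule.inclusion hNK, Submodule.inclusion_ne_zero hNK hN⟩
  · have hspan : Ideal.span {(p : ZMod (p ^ 2))} ≠ ⊥ := by
      rw [Ne, Ideal.span_singleton_eq_bot]
      exact ZMod.natCast_ne_zero hp
    refine hprime _ _ hspan hspan ?_
    rw [Ideal.span_singleton_mul_span_singleton, ZMod.natCast_mul_self_eq_zero p,
      Ideal.span_singleton_eq_bot]
end

section
/- A ring R satisfies: every nonzero left R-module has nonzero socle (left semiartinian) and all simple left R-modules are isomorphic (left local), if and only if for every left R-module M, every left exact preradical σ, and every nonzero submodule N ≤ M, σ(N) = 0 implies σ(M) = 0. -/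
universe u

/-- A preradical is left exact iff `σ(N) = σ(M) ∩ N` for every submodule `N ≤ M`. -/
def Preradical.LeftExact {R : Type u} [Ring R] (σ : Preradical R) : Prop :=
  ∀ (M : Type u) [AddCommGroup M] [Module R M] (N : Submodule R M),
    (σ.rad N).map N.subtype = σ.rad M ⊓ N

section Aux

variable {R : Type u} [Ring R]

/-- If a preradical vanishes on a module, it vanishes on any isomorphic module. -/
lemma Preradical.rad_bot_congr (σ : Preradical R) {A B : Type u}
    [AddCommGroup A] [Module R A] [AddCommGroup B] [Module R B]
    (e : A ≃ₗ[R] B) (h : σ.rad A = ⊥) : σ.rad B = ⊥ := by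
  rw [eq_bot_iff]
  intro x hx
  have hmem : e.symm x ∈ σ.rad A :=
    σ.map_le (e.symm : B →ₗ[R] A) (Submodule.mem_map_of_mem hx)
  rw [h, Submodule.mem_bot] at hmem
  have : x = e (e.symm x) := (e.apply_symm_apply x).symm
  rw [this, hmem, map_zero]
  exact Submodule.zero_mem _

/-- The set of simple submodules of `M` isomorphic to `S`. -/
def copies (R : Type u) [Ring R] (S : Type u) [AddCommGroup S] [Module R S]
    (M : Type u) [AddCommGroup M] [Module R M] : Set (Submodule R M) :=
  {W | IsSimpleModule R W ∧ Nonempty (S ≃ₗ[R] W)}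

/-- The trace of copies of `S` : the isotypic `S`-component, as a preradical. -/
noncomputable def traceRad (R : Type u) [Ring R] (S : Type u) [AddCommGroup S] [Module R S] :
    Preradical R where
  rad M _ _ := sSup (copies R S M)
  map_le {M N} _ _ _ _ f := by
    show (sSup (copies R S M)).map f ≤ sSup (copies R S N)
    rw [sSup_eq_iSup, Submodule.map_iSup]
    refine iSup_le fun W => ?_
    rw [Submodule.map_iSup]
    refine iSup_le fun hW => ?_
    haveI : IsSimpleModule R W := hW.1
    obtain ⟨e⟩ := hW.2
    rcases LinearMap.injective_or_eq_zero (f.comp W.subtype) with hinj | hzero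
    · have hr : W.map f = LinearMap.range (f.comp W.subtype) := by
        rw [LinearMap.range_comp, Submodule.range_subtype]
      have e2 : (W : Type u) ≃ₗ[R] ↥(W.map f) := by
        rw [hr]; exact LinearEquiv.ofInjective _ hinj
      refine le_sSup ⟨IsSimpleModule.congr e2.symm, ⟨e.trans e2⟩⟩
    · have : W.map f = ⊥ := by
        rw [eq_bot_iff]
        intro x hx
        obtain ⟨y, hy, rfl⟩ := hx
        have : f.comp W.subtype ⟨y, hy⟩ = 0 := by rw [hzero]; rfl
        simpa using this
      rw [this]
      exact bot_le

variable (S : Type u) [AddCommGroup S] [Module R S]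

lemma traceRad_semisimple (M : Type u) [AddCommGroup M] [Module R M] :
    IsSemisimpleModule R ↥(sSup (copies R S M)) := by
  rw [sSup_eq_iSup]
  exact isSemisimpleModule_biSup_of_isSemisimpleModule_submodule
    (fun W hW => haveI : IsSimpleModule R W := hW.1; inferInstance)

/-- Any simple submodule of the isotypic `S`-component is isomorphic to `S`. -/
lemma copies_of_simple_le {M : Type u} [AddCommGroup M] [Module R M]
    {W : Submodule R M} (hW : IsSimpleModule R W) (hle : W ≤ sSup (copies R S M)) :
    Nonempty (S ≃ₗ[R] W) := by
  set P := sSup (copies R S M) with hP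
  haveI : IsSemisimpleModule R P := traceRad_semisimple S M
  set W' : Submodule R P := W.comap P.subtype with hW'def
  have eWW : (W' : Type u) ≃ₗ[R] W := Submodule.comapSubtypeEquivOfLe hle
  haveI : IsSimpleModule R W := hW
  haveI hW's : IsSimpleModule R W' := IsSimpleModule.congr eWW
  obtain ⟨q, hq⟩ := exists_isCompl W'
  set π : ↥P →ₗ[R] ↥W' := Submodule.linearProjOfIsCompl W' q hq with hπ
  -- find a copy V of S on which π does not vanish
  have hex : ∃ V : Submodule R M, ∃ hV : V ∈ copies R S M,
      π.comp (Submodule.inclusion (le_sSup hV : V ≤ P)) ≠ 0 := by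
    by_contra hall
    push_neg at hall
    -- then ker π contains every comap of a copy, hence everything
    have hker : ∀ V ∈ copies R S M, V.comap P.subtype ≤ LinearMap.ker π := by
      intro V hV x hx
      have h0 := hall V hV
      have : π.comp (Submodule.inclusion (le_sSup hV)) ⟨(x : M), hx⟩ = 0 := by rw [h0]; rfl
      have hx2 : Submodule.inclusion (le_sSup hV) (⟨(x : M), hx⟩ : V) = x := by
        apply Subtype.ext; rfl
      rw [LinearMap.comp_apply, hx2] at this
      exact this
    have htop : (⨆ V ∈ copies R S M, V.comap P.subtype) = (⊤ : Submodule R P) := by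
      apply Submodule.map_injective_of_injective P.injective_subtype
      rw [Submodule.map_top, Submodule.range_subtype, Submodule.map_iSup]
      conv_rhs => rw [hP, sSup_eq_iSup]
      refine iSup_congr fun V => ?_
      rw [Submodule.map_iSup]
      refine iSup_congr fun hV => ?_
      rw [Submodule.map_comap_subtype]
      exact inf_eq_right.mpr (le_sSup hV)
    have hker2 : (⊤ : Submodule R P) ≤ LinearMap.ker π := by
      rw [← htop]
      exact iSup_le fun V => iSup_le fun hV => hker V hV
    -- but π is the identity on W', which is nontrivial
    haveI := hW's.nontrivial
    obtain ⟨w, hw⟩ := exists_ne (0 : W')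
    have : π (W'.subtype w) = w := Submodule.linearProjOfIsCompl_apply_left hq w
    have h0 : π (W'.subtype w) = 0 := hker2 trivial
    exact hw (by rw [← this, h0])
  obtain ⟨V, hV, hne⟩ := hex
  haveI : IsSimpleModule R V := hV.1
  obtain ⟨eSV⟩ := hV.2
  have hbij := (LinearMap.bijective_or_eq_zero
    (π.comp (Submodule.inclusion (le_sSup hV)))).resolve_right hne
  exact ⟨(eSV.trans (LinearEquiv.ofBijective _ hbij)).trans eWW⟩

lemma traceRad_leftExact : (traceRad R S).LeftExact := by
  intro M _ _ N
  apply le_antisymm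
  · exact le_inf ((traceRad R S).map_le N.subtype)
      (by rw [Submodule.map_le_iff_le_comap]; intro x _; exact x.2)
  · -- rad M ⊓ N ≤ map N.subtype (rad N)
    set P := sSup (copies R S M) with hP
    haveI : IsSemisimpleModule R P := traceRad_semisimple S M
    set K : Submodule R M := P ⊓ N with hK
    have hKP : K ≤ P := inf_le_left
    have hKN : K ≤ N := inf_le_right
    haveI : IsSemisimpleModule R K :=
      IsSemisimpleModule.congr (Submodule.comapSubtypeEquivOfLe hKP).symm
    show K ≤ _
    have hKdecomp : K = ⨆ W₀ ∈ {m : Submodule R K | IsSimpleModule R m},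
        Submodule.map K.subtype W₀ := by
      conv_lhs => rw [← Submodule.range_subtype K, ← Submodule.map_top,
        ← IsSemisimpleModule.sSup_simples_eq_top R K, sSup_eq_iSup, Submodule.map_iSup]
      exact iSup_congr fun W₀ => by rw [Submodule.map_iSup]
    rw [hKdecomp]
    refine iSup_le fun W₀ => iSup_le fun hW₀ => ?_
    haveI : IsSimpleModule R W₀ := hW₀
    set W : Submodule R M := W₀.map K.subtype with hWdef
    have eW : (W₀ : Type u) ≃ₗ[R] W := Submodule.equivMapOfInjective _ K.injective_subtype W₀
    have hWsimple : IsSimpleModule R W := IsSimpleModule.congr eW.symm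
    have hWK : W ≤ K := by
      rw [hWdef, Submodule.map_le_iff_le_comap]; intro x _; exact x.2
    have hWle : W ≤ P := hWK.trans hKP
    obtain ⟨eSW⟩ := copies_of_simple_le S hWsimple hWle
    -- W corresponds to a copy of S inside N
    have hWN : W ≤ N := hWK.trans hKN
    set W₁ : Submodule R N := W.comap N.subtype with hW₁
    have eW₁ : (W₁ : Type u) ≃ₗ[R] W := Submodule.comapSubtypeEquivOfLe hWN
    have hW₁mem : W₁ ∈ copies R S N :=
      ⟨IsSimpleModule.congr eW₁, ⟨eSW.trans eW₁.symm⟩⟩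
    have : W₁ ≤ (traceRad R S).rad N := le_sSup hW₁mem
    have hmap : W ≤ Submodule.map N.subtype ((traceRad R S).rad N) := by
      have : Submodule.map N.subtype W₁ ≤ Submodule.map N.subtype ((traceRad R S).rad N) :=
        Submodule.map_mono this
      rwa [hW₁, Submodule.map_comap_subtype, inf_eq_right.mpr hWN] at this
    exact hmap

lemma simple_ne_bot {M : Type u} [AddCommGroup M] [Module R M]
    {W : Submodule R M} (hW : IsSimpleModule R W) : W ≠ ⊥ :=
  (isSimpleModule_iff_isAtom.mp hW).1

end Aux

/-- `R` is left semiartinian and left local iff every left `R`-module is first with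
respect to every left exact preradical. -/
theorem stmt18 (R : Type u) [Ring R] :
    ((∀ (M : Type u) [AddCommGroup M] [Module R M], Nontrivial M →
        ∃ S : Submodule R M, IsSimpleModule R S) ∧
      (∀ (S T : Type u) [AddCommGroup S] [Module R S] [AddCommGroup T] [Module R T],
        IsSimpleModule R S → IsSimpleModule R T → Nonempty (S ≃ₗ[R] T))) ↔
      ∀ (M : Type u) [AddCommGroup M] [Module R M] (σ : Preradical R), σ.LeftExact →
        ∀ N : Submodule R M, N ≠ ⊥ → σ.rad N = ⊥ → σ.rad M = ⊥ := by
  constructor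
  · rintro ⟨hsa, hiso⟩ M _ _ σ hle N hN hσN
    by_contra hM
    haveI : Nontrivial ↥(σ.rad M) := (Submodule.nontrivial_iff_ne_bot).mpr hM
    haveI : Nontrivial ↥N := (Submodule.nontrivial_iff_ne_bot).mpr hN
    obtain ⟨S', hS'⟩ := hsa ↥(σ.rad M) ‹_›
    obtain ⟨T', hT'⟩ := hsa ↥N ‹_›
    obtain ⟨e⟩ := hiso ↥S' ↥T' hS' hT'
    -- σ.rad ↥(σ.rad M) = ⊤
    have h1 := hle M (σ.rad M)
    rw [inf_idem] at h1
    have h1' : σ.rad ↥(σ.rad M) = ⊤ := by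
      apply Submodule.map_injective_of_injective (σ.rad M).injective_subtype
      rw [h1, Submodule.map_top, Submodule.range_subtype]
    -- σ.rad ↥S' = ⊤
    have h2 := hle ↥(σ.rad M) S'
    rw [h1', top_inf_eq] at h2
    have h2' : σ.rad ↥S' = ⊤ := by
      apply Submodule.map_injective_of_injective S'.injective_subtype
      rw [h2, Submodule.map_top, Submodule.range_subtype]
    -- σ.rad ↥T' = ⊥
    have h3 := hle ↥N T'
    rw [hσN, bot_inf_eq] at h3
    have h3' : σ.rad ↥T' = ⊥ := by
      apply Submodule.map_injective_of_injective T'.injective_subtype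
      rw [h3, Submodule.map_bot]
    -- transfer ⊤ along e to get a contradiction
    have h4 : (⊤ : Submodule R ↥T') ≤ σ.rad ↥T' := by
      have := σ.map_le (e : ↥S' →ₗ[R] ↥T')
      rwa [h2', Submodule.map_top, LinearEquiv.range] at this
    rw [h3', le_bot_iff] at h4
    haveI := hT'
    haveI : IsSimpleModule R ↥T' := hT'
    exact absurd h4.symm bot_ne_top
  · intro H
    constructor
    · intro M _ _ hM
      by_contra hns
      push_neg at hns
      haveI : Nontrivial R := Module.nontrivial R M
      obtain ⟨I, hI⟩ := Ideal.exists_maximal R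
      haveI hSsimple : IsSimpleModule R (R ⧸ I) :=
        isSimpleModule_iff_isCoatom.mpr (Ideal.isMaximal_def.mp hI)
      set S := R ⧸ I
      set σ := traceRad R S with hσ
      -- σ.rad M = ⊥ since M has no simple submodule
      have hradM : σ.rad M = ⊥ := by
        rw [eq_bot_iff]
        show sSup (copies R S M) ≤ ⊥
        exact sSup_le fun W hW => absurd hW.1 (hns W)
      -- the submodule M × 0 of M × S
      set N : Submodule R (M × S) := LinearMap.range (LinearMap.inl R M S) with hNdef
      have hNne : N ≠ ⊥ := by
        obtain ⟨x, y, hxy⟩ := hM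
        have hx : x ≠ 0 ∨ y ≠ 0 := by
          by_contra h; push_neg at h; exact hxy (h.1.trans h.2.symm)
        obtain ⟨z, hz⟩ : ∃ z : M, z ≠ 0 := by
          rcases hx with h | h
          · exact ⟨x, h⟩
          · exact ⟨y, h⟩
        rw [Submodule.ne_bot_iff]
        exact ⟨(z, 0), ⟨z, rfl⟩, fun hc => hz (by simpa using congrArg Prod.fst hc)⟩
      have hradN : σ.rad ↥N = ⊥ :=
        σ.rad_bot_congr (LinearEquiv.ofInjective _ LinearMap.inl_injective) hradM
      have hrad := H (M × S) σ (traceRad_leftExact S) N hNne hradN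
      -- but the copy of S inside M × S is nonzero
      set V : Submodule R (M × S) := LinearMap.range (LinearMap.inr R M S) with hVdef
      have eV : S ≃ₗ[R] ↥V := LinearEquiv.ofInjective _ LinearMap.inr_injective
      have hVmem : V ∈ copies R S (M × S) := ⟨IsSimpleModule.congr eV.symm, ⟨eV⟩⟩
      have hVle : V ≤ σ.rad (M × S) := le_sSup hVmem
      rw [hrad] at hVle
      exact simple_ne_bot hVmem.1 (le_bot_iff.mp hVle)
    · intro S T _ _ _ _ hS hT
      haveI := hS; haveI := hT
      by_contra hne
      set σ := traceRad R S with hσ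
      -- σ vanishes on T
      have hradT : σ.rad T = ⊥ := by
        rw [eq_bot_iff]
        show sSup (copies R S T) ≤ ⊥
        refine sSup_le fun V hV => ?_
        rcases eq_bot_or_eq_top V with h | h
        · exact h.le
        · exfalso
          obtain ⟨eSV⟩ := hV.2
          rw [h] at eSV
          exact hne ⟨eSV.trans Submodule.topEquiv⟩
      set N : Submodule R (S × T) := LinearMap.range (LinearMap.inr R S T) with hNdef
      have hNne : N ≠ ⊥ := by
        haveI := hT.nontrivial
        obtain ⟨t, ht⟩ := exists_ne (0 : T)
        rw [Submodule.ne_bot_iff]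
        exact ⟨(0, t), ⟨t, rfl⟩, fun hc => ht (by simpa using congrArg Prod.snd hc)⟩
      have hradN : σ.rad ↥N = ⊥ :=
        σ.rad_bot_congr (LinearEquiv.ofInjective _ LinearMap.inr_injective) hradT
      have hrad := H (S × T) σ (traceRad_leftExact S) N hNne hradN
      set V : Submodule R (S × T) := LinearMap.range (LinearMap.inl R S T) with hVdef
      have eV : S ≃ₗ[R] ↥V := LinearEquiv.ofInjective _ LinearMap.inl_injective
      have hVmem : V ∈ copies R S (S × T) := ⟨IsSimpleModule.congr eV.symm, ⟨eV⟩⟩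
      have hVle : V ≤ σ.rad (S × T) := le_sSup hVmem
      rw [hrad] at hVle
      exact simple_ne_bot hVmem.1 (le_bot_iff.mp hVle)
end

section
/- For a ring R the following are equivalent: (1) R is left semiartinian, left local, and a left V-ring (every simple left module is injective); (2) for every nonzero left R-module M, every preradical σ on R-Mod and every nonzero submodule N ≤ M, σ(N) = 0 implies σ(M) = 0; (3) R is semisimple with all simple modules isomorphic (semisimple homogeneous). -/
universe u

/-!
A ring all of whose simple modules are projective is semisimple: otherwise its socle lies in a
maximal left ideal `m`, and a splitting of `R → R ⧸ m` embeds the simple module `R ⧸ m` into the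
socle, hence into `m`, the kernel of the map it splits. Under (1) or (2) all simple modules are
isomorphic, so it suffices that one simple left ideal `T` is a direct summand of `R`. In a V-ring
`T` is injective, hence a summand. Under (2), the Jacobson radical is a preradical vanishing on
`T`, hence on `R × T ⊇ T`, hence on `R`, so `T` avoids some maximal left ideal. Applied to the
trace preradical of `A` and `N ≤ N × A`, condition (2) also gives a nonzero map `A → N` between
any two nonzero modules, whence homogeneity and semiartinianity.

Conversely, over a semisimple homogeneous ring, `σ N = 0` for one `N ≠ 0` forces `σ` to vanish on
the simple modules, hence on every module, since every module is semisimple.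
-/

variable {R : Type u} [Ring R]

section Conditions

variable (R)

def IsLeftSemiartinian : Prop :=
  ∀ (M : Type u) [AddCommGroup M] [Module R M], Nontrivial M →
    ∃ S : Submodule R M, IsSimpleModule R S

def SimpleModulesIsomorphic : Prop :=
  ∀ (S T : Type u) [AddCommGroup S] [Module R S] [AddCommGroup T] [Module R T],
    IsSimpleModule R S → IsSimpleModule R T → Nonempty (S ≃ₗ[R] T)

def IsLeftVRing : Prop :=
  ∀ (S : Type u) [AddCommGroup S] [Module R S], IsSimpleModule R S → Module.Injective R S

-- In the paper's terms: every nonzero module is first with respect to every preradical.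
def AllModulesFirst : Prop :=
  ∀ (M : Type u) [AddCommGroup M] [Module R M], Nontrivial M →
    ∀ (σ : Preradical R) (N : Submodule R M), N ≠ ⊥ → σ.rad N = ⊥ → σ.rad M = ⊥

end Conditions

namespace Preradical

variable (σ : Preradical R) {M N : Type u} [AddCommGroup M] [Module R M]
  [AddCommGroup N] [Module R N]

theorem rad_eq_bot_of_injective {f : M →ₗ[R] N} (hf : Function.Injective f)
    (h : σ.rad N = ⊥) : σ.rad M = ⊥ := by
  have hmap := σ.map_le f
  rw [h, le_bot_iff] at hmap
  exact Submodule.map_injective_of_injective hf (by rw [hmap, Submodule.map_bot])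

theorem comap_rad_le_of_leftInverse {i : N →ₗ[R] M} {p : M →ₗ[R] N}
    (h : p ∘ₗ i = LinearMap.id) : (σ.rad M).comap i ≤ σ.rad N := fun x hx => by
  simpa [← LinearMap.comp_apply, h] using σ.map_le p ⟨i x, hx, rfl⟩

theorem rad_eq_bot_of_isSemisimpleModule [IsSemisimpleModule R M]
    (h : ∀ S : Submodule R M, IsSimpleModule R S → σ.rad S = ⊥) : σ.rad M = ⊥ := by
  by_contra hM
  obtain ⟨S, hSle, hS⟩ :=
    (IsSemisimpleModule.eq_bot_or_exists_simple_le (σ.rad M)).resolve_left hM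
  obtain ⟨C, hC⟩ := exists_isCompl S
  have htop : (⊤ : Submodule R S) ≤ σ.rad S := by
    rw [← Submodule.comap_subtype_eq_top.mpr hSle]
    exact σ.comap_rad_le_of_leftInverse (Submodule.projectionOnto_comp_subtype hC)
  have := IsSimpleModule.nontrivial R S
  exact bot_ne_top (le_top.antisymm (h S hS ▸ htop))

variable (R) in
noncomputable def trace (A : Type u) [AddCommGroup A] [Module R A] : Preradical R where
  rad M _ _ := ⨆ f : A →ₗ[R] M, LinearMap.range f
  map_le g := by
    rw [Submodule.map_iSup]
    exact iSup_le fun f =>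
      LinearMap.range_comp f g ▸ le_iSup (fun h => LinearMap.range h) (g ∘ₗ f)

theorem trace_rad_eq_bot_iff {A : Type u} [AddCommGroup A] [Module R A] :
    (trace R A).rad M = ⊥ ↔ ∀ f : A →ₗ[R] M, f = 0 := by
  simp only [trace, iSup_eq_bot, LinearMap.range_eq_bot]

def jacobson : Preradical R where
  rad M _ _ := Module.jacobson R M
  map_le f := Module.map_jacobson_le f

end Preradical

theorem exists_isCompl_of_jacobson_eq_bot {M : Type u} [AddCommGroup M] [Module R M]
    (hJ : Module.jacobson R M = ⊥) {T : Submodule R M} (hT : IsAtom T) :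
    ∃ C, IsCompl T C := by
  obtain ⟨C, hC, hTC⟩ : ∃ C, IsCoatom C ∧ ¬ T ≤ C := by
    by_contra! hle
    exact hT.ne_bot (le_bot_iff.mp (hJ ▸ le_sInf hle))
  exact ⟨C, hT.not_le_iff_disjoint.mp hTC, (hC.not_le_iff_codisjoint.mp hTC).symm⟩

theorem isSemisimpleRing_of_forall_projective
    (h : ∀ (S : Type u) [AddCommGroup S] [Module R S], IsSimpleModule R S →
      Module.Projective R S) :
    IsSemisimpleRing R := by
  refine IsSemisimpleModule.of_sSup_simples_eq_top (by_contra fun hsoc => ?_)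
  obtain ⟨m, hm, hsoc_le⟩ := (eq_top_or_exists_le_coatom _).resolve_left hsoc
  have hS := isSimpleModule_iff_isCoatom.mpr hm
  have := h _ hS
  obtain ⟨s, hs⟩ := Module.projective_lifting_property m.mkQ LinearMap.id m.mkQ_surjective
  have hs_inj : Function.Injective s := fun x y hxy => by
    simpa [← LinearMap.comp_apply, hs] using congr(m.mkQ $hxy)
  have hs_le : LinearMap.range s ≤ m :=
    (le_sSup (show LinearMap.range s ∈ {m : Submodule R R | IsSimpleModule R m} from
      .congr (LinearEquiv.ofInjective s hs_inj).symm)).trans hsoc_le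
  have := IsSimpleModule.nontrivial R (R ⧸ m)
  obtain ⟨x, hx⟩ := exists_ne (0 : R ⧸ m)
  apply hx
  calc x = m.mkQ (s x) := by rw [← LinearMap.comp_apply, hs, LinearMap.id_apply]
    _ = 0 := (Submodule.Quotient.mk_eq_zero m).mpr (hs_le ⟨x, rfl⟩)

theorem IsLeftSemiartinian.isSemisimpleRing (hsa : IsLeftSemiartinian R)
    (hhom : SimpleModulesIsomorphic R)
    (hproj : ∀ T : Submodule R R, IsSimpleModule R T → Module.Projective R T) :
    IsSemisimpleRing R := by
  refine isSemisimpleRing_of_forall_projective fun S _ _ hS => ?_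
  have := IsSimpleModule.nontrivial R S
  have := Module.nontrivial R S
  obtain ⟨T, hT⟩ := hsa R inferInstance
  obtain ⟨e⟩ := hhom S T hS hT
  have := hproj T hT
  exact Module.Projective.of_equiv' e.symm

theorem IsLeftVRing.isSemisimpleRing (hV : IsLeftVRing R) (hsa : IsLeftSemiartinian R)
    (hhom : SimpleModulesIsomorphic R) : IsSemisimpleRing R :=
  hsa.isSemisimpleRing hhom fun T hT =>
    let ⟨p, hp⟩ := (hV T hT).out T.subtype T.injective_subtype LinearMap.id
    Module.Projective.of_split T.subtype p (LinearMap.ext hp)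

theorem allModulesFirst_of_isSemisimpleRing [IsSemisimpleRing R]
    (hhom : SimpleModulesIsomorphic R) : AllModulesFirst R := by
  intro M _ _ _ σ N hN hσN
  obtain ⟨W, hWN, hW⟩ := (IsSemisimpleModule.eq_bot_or_exists_simple_le N).resolve_left hN
  have hσW : σ.rad W = ⊥ := σ.rad_eq_bot_of_injective (Submodule.inclusion_injective hWN) hσN
  exact σ.rad_eq_bot_of_isSemisimpleModule fun S hS =>
    let ⟨e⟩ := hhom S W hS hW
    σ.rad_eq_bot_of_injective e.injective hσW

namespace AllModulesFirst

theorem rad_eq_bot_of_injective (h : AllModulesFirst R) (σ : Preradical R) {A M : Type u}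
    [AddCommGroup A] [Module R A] [AddCommGroup M] [Module R M] [Nontrivial A]
    {f : A →ₗ[R] M} (hf : Function.Injective f) (hA : σ.rad A = ⊥) : σ.rad M = ⊥ := by
  let e := LinearEquiv.ofInjective f hf
  have := e.injective.nontrivial
  exact h M hf.nontrivial σ (LinearMap.range f) (Submodule.nontrivial_iff_ne_bot.mp this)
    (σ.rad_eq_bot_of_injective e.symm.injective hA)

theorem exists_ne_zero (h : AllModulesFirst R) (A M : Type u) [AddCommGroup A] [Module R A]
    [AddCommGroup M] [Module R M] [Nontrivial A] [Nontrivial M] : ∃ f : A →ₗ[R] M, f ≠ 0 := by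
  by_contra! hzero
  have hMA : (Preradical.trace R A).rad (M × A) = ⊥ := h.rad_eq_bot_of_injective _
    LinearMap.inl_injective (Preradical.trace_rad_eq_bot_iff.mpr hzero)
  have hinr : LinearMap.inr R M A = 0 := Preradical.trace_rad_eq_bot_iff.mp hMA _
  obtain ⟨a, ha⟩ := exists_ne (0 : A)
  exact ha (by simpa using LinearMap.congr_fun hinr a)

theorem simpleModulesIsomorphic (h : AllModulesFirst R) : SimpleModulesIsomorphic R := by
  intro S T _ _ _ _ hS hT
  have := IsSimpleModule.nontrivial R S
  have := IsSimpleModule.nontrivial R T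
  obtain ⟨f, hf⟩ := h.exists_ne_zero S T
  exact ⟨.ofBijective f (LinearMap.bijective_of_ne_zero hf)⟩

theorem isLeftSemiartinian (h : AllModulesFirst R) : IsLeftSemiartinian R := by
  intro M _ _ _
  have := Module.nontrivial R M
  obtain ⟨I, hI⟩ := Ideal.exists_maximal R
  have := isSimpleModule_iff_isCoatom.mpr (Ideal.isMaximal_def.mp hI)
  have := IsSimpleModule.nontrivial R (R ⧸ I)
  obtain ⟨f, hf⟩ := h.exists_ne_zero (R ⧸ I) M
  exact ⟨LinearMap.range f,
    .congr (LinearEquiv.ofInjective f (LinearMap.injective_of_ne_zero hf)).symm⟩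

theorem jacobson_eq_bot (h : AllModulesFirst R) (T : Type u) [AddCommGroup T] [Module R T]
    [IsSimpleModule R T] : Module.jacobson R R = ⊥ := by
  have hT : Module.jacobson R T = ⊥ := le_bot_iff.mp (sInf_le isCoatom_bot)
  have := IsSimpleModule.nontrivial R T
  exact Module.jacobson_eq_bot_of_injective _ LinearMap.inl_injective
    (h.rad_eq_bot_of_injective Preradical.jacobson (LinearMap.inr_injective (M := R)) hT)

theorem isSemisimpleRing (h : AllModulesFirst R) : IsSemisimpleRing R :=
  h.isLeftSemiartinian.isSemisimpleRing h.simpleModulesIsomorphic fun T hT =>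
    let ⟨_, hC⟩ := exists_isCompl_of_jacobson_eq_bot (h.jacobson_eq_bot T)
      (isSimpleModule_iff_isAtom.mp hT)
    Module.Projective.of_split T.subtype _ (Submodule.projectionOnto_comp_subtype hC)

end AllModulesFirst

/-- For a ring `R`, the following are equivalent: (1) `R` is left semiartinian,
left local, and a left `V`-ring; (2) every nonzero left `R`-module is first with
respect to every preradical; (3) `R` is semisimple with all simple modules
isomorphic (semisimple homogeneous). -/
theorem stmt19 (R : Type u) [Ring R] :
    List.TFAE
      [(∀ (M : Type u) [AddCommGroup M] [Module R M], Nontrivial M →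
          ∃ S : Submodule R M, IsSimpleModule R S) ∧
        (∀ (S T : Type u) [AddCommGroup S] [Module R S] [AddCommGroup T] [Module R T],
          IsSimpleModule R S → IsSimpleModule R T → Nonempty (S ≃ₗ[R] T)) ∧
        (∀ (S : Type u) [AddCommGroup S] [Module R S], IsSimpleModule R S →
          Module.Injective R S),
       ∀ (M : Type u) [AddCommGroup M] [Module R M], Nontrivial M →
         ∀ (σ : Preradical R) (N : Submodule R M), N ≠ ⊥ → σ.rad N = ⊥ → σ.rad M = ⊥,
       IsSemisimpleRing R ∧
        (∀ (S T : Type u) [AddCommGroup S] [Module R S] [AddCommGroup T] [Module R T],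
          IsSimpleModule R S → IsSimpleModule R T → Nonempty (S ≃ₗ[R] T))] := by
  tfae_have 1 → 3
  | ⟨hsa, hhom, hV⟩ => ⟨IsLeftVRing.isSemisimpleRing hV hsa hhom, hhom⟩
  tfae_have 3 → 1
  | ⟨_, hhom⟩ => ⟨fun M _ _ _ => IsSemisimpleModule.exists_simple_submodule R M, hhom,
      fun S _ _ _ => Module.injective_of_isSemisimpleRing R S⟩
  tfae_have 3 → 2
  | ⟨_, hhom⟩ => allModulesFirst_of_isSemisimpleRing hhom
  tfae_have 2 → 3
  | h => ⟨AllModulesFirst.isSemisimpleRing h, AllModulesFirst.simpleModulesIsomorphic h⟩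
  tfae_finish
end
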